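/- arXiv:2101.08007 — 7 statements merged into one kernel-verified Lean document; each statement's English description precedes it below -/
import Mathlib

section
/- Suppose π = 1/2, x′ = 1−x, z′ = 1−z, x ≥ 1/2 and z ≥ 1/2. If y₁ − y₂ ≥ y₄ − y₃ ≥ 0, then RD_crude ≥ RD_obs ≥ RD_true; and if y₁ − y₂ ≤ y₄ − y₃ ≤ 0, then RD_crude ≤ RD_obs ≤ RD_true. (Peña 2020, Theorems 3–4, as re-stated in the paper's Theorem 1.) -/
/-!
With `P(c) = 1/2` and the symmetric choices `x' = 1 - x`, `z' = 1 - z`, all three risk differences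
are values of the single affine function `t ↦ y₁ t + y₂ (1 - t) - y₃ (1 - t) - y₄ t`, whose slope is
the interaction `(y₁ - y₂) - (y₄ - y₃)`: the true one at `t = 1/2`, the crude one at `t = P(c | a) = x`,
and the `D`-adjusted one at `t = ∑_d P(c | a, d) P(d)`. For `x ≥ 1/2` an explicit computation puts
this last point between the other two: its distances to `1/2` and to `x` are nonnegative multiples
of `z (1 - z) (2x - 1)` and `x (1 - x) (2x - 1) (2z - 1)²`. The sign of the interaction then orders
the three values.
-/

/-- Bayes' rule: the posterior of `c` given prior `prior = P(c)` and likelihoods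
`p = P(e | c)`, `q = P(e | c̄)` of some evidence `e`. -/
noncomputable def bayesPosterior (prior p q : ℝ) : ℝ := p * prior / (p * prior + q * (1 - prior))

lemma bayesPosterior_half (p q : ℝ) : bayesPosterior (1/2) p q = p / (p + q) := by
  rw [bayesPosterior, show p * (1/2) + q * (1 - 1/2) = (p + q) / 2 by ring, mul_one_div,
    div_div_div_cancel_right₀ two_ne_zero]

lemma bayesPosterior_half_swap {p q : ℝ} (h : p + q ≠ 0) :
    bayesPosterior (1/2) q p = 1 - bayesPosterior (1/2) p q := by
  rw [bayesPosterior_half, bayesPosterior_half, add_comm q p, eq_sub_iff_add_eq,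
    ← add_div, add_comm q p, div_self h]

/-- `∑_d P(c | a, d) P(d)` in the symmetric model, with `x = P(a | c)` and `z = P(d | c)`. -/
noncomputable def standardizedPosterior (x z : ℝ) : ℝ :=
  (bayesPosterior (1/2) (x * z) ((1 - x) * (1 - z)) +
    bayesPosterior (1/2) (x * (1 - z)) ((1 - x) * z)) / 2

section standardizedPosterior

variable {x z : ℝ}

lemma standardizedPosterior_sub_half (h₁ : x * z + (1 - x) * (1 - z) ≠ 0)
    (h₂ : x * (1 - z) + (1 - x) * z ≠ 0) :
    standardizedPosterior x z - 1/2 =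
      z * (1 - z) * (2 * x - 1) / (2 * ((x * z + (1 - x) * (1 - z)) * (x * (1 - z) + (1 - x) * z))) := by
  rw [standardizedPosterior, bayesPosterior_half, bayesPosterior_half, div_add_div _ _ h₁ h₂, div_div,
    div_sub_div _ _ (by positivity) two_ne_zero, div_eq_div_iff (by positivity) (by positivity)]
  ring

lemma sub_standardizedPosterior (h₁ : x * z + (1 - x) * (1 - z) ≠ 0)
    (h₂ : x * (1 - z) + (1 - x) * z ≠ 0) :
    x - standardizedPosterior x z =
      x * (1 - x) * (2 * x - 1) * (2 * z - 1) ^ 2 /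
        (2 * ((x * z + (1 - x) * (1 - z)) * (x * (1 - z) + (1 - x) * z))) := by
  rw [standardizedPosterior, bayesPosterior_half, bayesPosterior_half, div_add_div _ _ h₁ h₂, div_div,
    sub_div' (by positivity), div_eq_div_iff (by positivity) (by positivity)]
  ring

lemma standardizedPosterior_mem_Icc (hx : 1/2 ≤ x) (hx1 : x ≤ 1) (hz0 : 0 < z) (hz1 : z < 1) :
    standardizedPosterior x z ∈ Set.Icc (1/2) x := by
  have h₁ : 0 < x * z + (1 - x) * (1 - z) := by nlinarith
  have h₂ : 0 < x * (1 - z) + (1 - x) * z := by nlinarith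
  have hz : 0 ≤ z * (1 - z) := mul_nonneg hz0.le (by linarith)
  have hx' : 0 ≤ x * (1 - x) := mul_nonneg (by linarith) (by linarith)
  have h2x : 0 ≤ 2 * x - 1 := by linarith
  constructor
  · rw [← sub_nonneg, standardizedPosterior_sub_half h₁.ne' h₂.ne']
    positivity
  · rw [← sub_nonneg, sub_standardizedPosterior h₁.ne' h₂.ne']
    positivity

end standardizedPosterior

/-- The risk difference `E[Y | a] - E[Y | ā]` when `P(c | a) = t` and `P(c | ā) = 1 - t`. -/
def riskDiff (y₁ y₂ y₃ y₄ t : ℝ) : ℝ := (y₁ * t + y₂ * (1 - t)) - (y₃ * (1 - t) + y₄ * t)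

section riskDiff

variable {y₁ y₂ y₃ y₄ : ℝ}

lemma riskDiff_sub_riskDiff (s t : ℝ) :
    riskDiff y₁ y₂ y₃ y₄ t - riskDiff y₁ y₂ y₃ y₄ s = ((y₁ - y₂) - (y₄ - y₃)) * (t - s) := by
  unfold riskDiff
  ring

lemma riskDiff_monotone (h : y₄ - y₃ ≤ y₁ - y₂) : Monotone (riskDiff y₁ y₂ y₃ y₄) := fun s t hst => by
  rw [← sub_nonneg, riskDiff_sub_riskDiff]
  exact mul_nonneg (sub_nonneg.2 h) (sub_nonneg.2 hst)

lemma riskDiff_antitone (h : y₁ - y₂ ≤ y₄ - y₃) : Antitone (riskDiff y₁ y₂ y₃ y₄) := fun s t hst => by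
  rw [← sub_nonneg, riskDiff_sub_riskDiff]
  exact mul_nonneg_of_nonpos_of_nonpos (sub_nonpos.2 h) (sub_nonpos.2 hst)

end riskDiff

theorem pena2020_thm3_4_general (pc x x' z z' : ℝ) (y₁ y₂ y₃ y₄ : ℝ)
    (hx1 : x < 1)
    (hz0 : 0 < z) (hz1 : z < 1)
    (hpch : pc = 1/2) (hx' : x' = 1 - x) (hz' : z' = 1 - z)
    (hxge : x ≥ 1/2)
    (Pca Pcab Pd Pcad Pcadb Pcbd Pcbdb EYad EYadb EYbd EYbdb RDtrue RDcrude RDobs : ℝ)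
    (hPca : Pca = x*pc/(x*pc + x'*(1-pc)))
    (hPcab : Pcab = (1-x)*pc/((1-x)*pc + (1-x')*(1-pc)))
    (hPd : Pd = z*pc + z'*(1-pc))
    (hPcad : Pcad = x*z*pc/(x*z*pc + x'*z'*(1-pc)))
    (hPcadb : Pcadb = x*(1-z)*pc/(x*(1-z)*pc + x'*(1-z')*(1-pc)))
    (hPcbd : Pcbd = (1-x)*z*pc/((1-x)*z*pc + (1-x')*z'*(1-pc)))
    (hPcbdb : Pcbdb = (1-x)*(1-z)*pc/((1-x)*(1-z)*pc + (1-x')*(1-z')*(1-pc)))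
    (hEYad : EYad = y₁*Pcad + y₂*(1-Pcad))
    (hEYadb : EYadb = y₁*Pcadb + y₂*(1-Pcadb))
    (hEYbd : EYbd = y₃*Pcbd + y₄*(1-Pcbd))
    (hEYbdb : EYbdb = y₃*Pcbdb + y₄*(1-Pcbdb))
    (hRDtrue : RDtrue = (y₁-y₃)*pc + (y₂-y₄)*(1-pc))
    (hRDcrude : RDcrude = (y₁*Pca + y₂*(1-Pca)) - (y₃*Pcab + y₄*(1-Pcab)))
    (hRDobs : RDobs = (EYad - EYbd)*Pd + (EYadb - EYbdb)*(1-Pd))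
    :
    (y₁ - y₂ ≥ y₄ - y₃ ∧ y₄ - y₃ ≥ 0 → RDcrude ≥ RDobs ∧ RDobs ≥ RDtrue) ∧
    (y₁ - y₂ ≤ y₄ - y₃ ∧ y₄ - y₃ ≤ 0 → RDcrude ≤ RDobs ∧ RDobs ≤ RDtrue) := by
  subst hpch hx' hz'
  simp only [sub_sub_cancel] at *
  change Pca = bayesPosterior (1/2) x (1 - x) at hPca
  change Pcab = bayesPosterior (1/2) (1 - x) x at hPcab
  change Pcad = bayesPosterior (1/2) (x * z) ((1 - x) * (1 - z)) at hPcad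
  change Pcadb = bayesPosterior (1/2) (x * (1 - z)) ((1 - x) * z) at hPcadb
  change Pcbd = bayesPosterior (1/2) ((1 - x) * z) (x * (1 - z)) at hPcbd
  change Pcbdb = bayesPosterior (1/2) ((1 - x) * (1 - z)) (x * z) at hPcbdb
  have h₁ : x * z + (1 - x) * (1 - z) ≠ 0 := by nlinarith
  have h₂ : x * (1 - z) + (1 - x) * z ≠ 0 := by nlinarith
  rw [bayesPosterior_half_swap h₂] at hPcbd
  rw [bayesPosterior_half_swap h₁] at hPcbdb
  have hCrude : RDcrude = riskDiff y₁ y₂ y₃ y₄ x := by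
    rw [hRDcrude, hPca, hPcab, bayesPosterior_half, bayesPosterior_half, add_sub_cancel,
      sub_add_cancel, div_one, div_one, riskDiff, sub_sub_cancel]
  have hObs : RDobs = riskDiff y₁ y₂ y₃ y₄ (standardizedPosterior x z) := by
    rw [hRDobs, hEYad, hEYadb, hEYbd, hEYbdb, hPd, hPcad, hPcadb, hPcbd, hPcbdb, riskDiff,
      standardizedPosterior]
    ring
  have hTrue : RDtrue = riskDiff y₁ y₂ y₃ y₄ (1/2) := by
    rw [hRDtrue, riskDiff]
    ring
  obtain ⟨lo, hi⟩ := standardizedPosterior_mem_Icc hxge hx1.le hz0 hz1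
  rw [hCrude, hObs, hTrue]
  exact ⟨fun ⟨hy, _⟩ => ⟨riskDiff_monotone hy hi, riskDiff_monotone hy lo⟩,
    fun ⟨hy, _⟩ => ⟨riskDiff_antitone hy hi, riskDiff_antitone hy lo⟩⟩

theorem pena2020_thm3_4 (pc x x' z z' : ℝ) (y₁ y₂ y₃ y₄ : ℝ)
    (hpc : 0 < pc) (hpc1 : pc < 1)
    (hx0 : 0 < x) (hx1 : x < 1) (hx'0 : 0 < x') (hx'1 : x' < 1)
    (hz0 : 0 < z) (hz1 : z < 1) (hz'0 : 0 < z') (hz'1 : z' < 1)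
    (hpch : pc = 1/2) (hx' : x' = 1 - x) (hz' : z' = 1 - z)
    (hxge : x ≥ 1/2) (hzge : z ≥ 1/2)
    (Pca Pcab Pd Pcad Pcadb Pcbd Pcbdb EYad EYadb EYbd EYbdb RDtrue RDcrude RDobs : ℝ)
    (hPca : Pca = x*pc/(x*pc + x'*(1-pc)))
    (hPcab : Pcab = (1-x)*pc/((1-x)*pc + (1-x')*(1-pc)))
    (hPd : Pd = z*pc + z'*(1-pc))
    (hPcad : Pcad = x*z*pc/(x*z*pc + x'*z'*(1-pc)))
    (hPcadb : Pcadb = x*(1-z)*pc/(x*(1-z)*pc + x'*(1-z')*(1-pc)))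
    (hPcbd : Pcbd = (1-x)*z*pc/((1-x)*z*pc + (1-x')*z'*(1-pc)))
    (hPcbdb : Pcbdb = (1-x)*(1-z)*pc/((1-x)*(1-z)*pc + (1-x')*(1-z')*(1-pc)))
    (hEYad : EYad = y₁*Pcad + y₂*(1-Pcad))
    (hEYadb : EYadb = y₁*Pcadb + y₂*(1-Pcadb))
    (hEYbd : EYbd = y₃*Pcbd + y₄*(1-Pcbd))
    (hEYbdb : EYbdb = y₃*Pcbdb + y₄*(1-Pcbdb))
    (hRDtrue : RDtrue = (y₁-y₃)*pc + (y₂-y₄)*(1-pc))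
    (hRDcrude : RDcrude = (y₁*Pca + y₂*(1-Pca)) - (y₃*Pcab + y₄*(1-Pcab)))
    (hRDobs : RDobs = (EYad - EYbd)*Pd + (EYadb - EYbdb)*(1-Pd))
    :
    (y₁ - y₂ ≥ y₄ - y₃ ∧ y₄ - y₃ ≥ 0 → RDcrude ≥ RDobs ∧ RDobs ≥ RDtrue) ∧
    (y₁ - y₂ ≤ y₄ - y₃ ∧ y₄ - y₃ ≤ 0 → RDcrude ≤ RDobs ∧ RDobs ≤ RDtrue) :=
  pena2020_thm3_4_general pc x x' z z' y₁ y₂ y₃ y₄ hx1 hz0 hz1 hpch hx' hz' hxge Pca Pcab Pd Pcad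
    Pcadb Pcbd Pcbdb EYad EYadb EYbd EYbdb RDtrue RDcrude RDobs hPca hPcab hPd hPcad hPcadb hPcbd
    hPcbdb hEYad hEYadb hEYbd hEYbdb hRDtrue hRDcrude hRDobs
end

section
/- Suppose π = 1/2, x′ = 1−x, z′ = 1−z, x ≤ 1/2 and z ≤ 1/2. Then RD_obs lies between RD_true and RD_crude, i.e. min(RD_true, RD_crude) ≤ RD_obs ≤ max(RD_true, RD_crude). (Paper's Theorem 3.) -/
/-!
With `π = 1/2`, `x' = 1 - x`, `z' = 1 - z`, all three risk differences have the form
`(y₁ - y₄) s + (y₂ - y₃) (1 - s)`, an affine function of `s`: at `s = 1/2` for `RD_true`, at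
`s = x` for `RD_crude`, and at `s = (p + q)/2` for `RD_obs`, where `p = P(c|a,d)`,
`q = P(c|a,d̄)` (and `P(c|ā,d) = 1 - q`, `P(c|ā,d̄) = 1 - p`). Closed forms for
`1 - (p + q)` and `p + q - 2x` show that `x ≤ (p + q)/2 ≤ 1/2`, and an affine function maps
`[x, 1/2]` into the interval spanned by its values at the endpoints.
-/

open Set

lemma mul_add_mul_one_sub_mem_uIcc {a b s u v : ℝ} (hs : s ∈ uIcc u v) :
    a * s + b * (1 - s) ∈ uIcc (a * u + b * (1 - u)) (a * v + b * (1 - v)) := by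
  rcases le_total b a with hba | hab
  · exact Monotone.mapsTo_uIcc (f := fun s ↦ a * s + b * (1 - s))
      (fun s t hst ↦ by nlinarith) hs
  · exact Antitone.mapsTo_uIcc (f := fun s ↦ a * s + b * (1 - s))
      (fun s t hst ↦ by nlinarith) hs

lemma mul_half_div_mul_half_add (a b : ℝ) :
    a * (1 / 2) / (a * (1 / 2) + b * (1 - 1 / 2)) = a / (a + b) := by
  rw [show (1 : ℝ) - 1 / 2 = 1 / 2 by norm_num, ← add_mul, mul_div_mul_right _ _ (by norm_num)]

lemma div_add_div_swap_eq_one {a b : ℝ} (h : a + b ≠ 0) : a / (a + b) + b / (b + a) = 1 := by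
  rw [add_comm b, ← add_div, div_self h]

section
variable {x z : ℝ}

lemma one_sub_posterior_sum (h₁ : x * z + (1 - x) * (1 - z) ≠ 0)
    (h₂ : x * (1 - z) + (1 - x) * z ≠ 0) :
    1 - (x * z / (x * z + (1 - x) * (1 - z)) + x * (1 - z) / (x * (1 - z) + (1 - x) * z)) =
      z * (1 - z) * (1 - 2 * x) / ((x * z + (1 - x) * (1 - z)) * (x * (1 - z) + (1 - x) * z)) := by
  rw [div_add_div _ _ h₁ h₂, one_sub_div (mul_ne_zero h₁ h₂)]
  ring

lemma posterior_sum_sub_two_mul (h₁ : x * z + (1 - x) * (1 - z) ≠ 0)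
    (h₂ : x * (1 - z) + (1 - x) * z ≠ 0) :
    x * z / (x * z + (1 - x) * (1 - z)) + x * (1 - z) / (x * (1 - z) + (1 - x) * z) - 2 * x =
      x * (1 - x) * (1 - 2 * x) * (1 - 2 * z) ^ 2 /
        ((x * z + (1 - x) * (1 - z)) * (x * (1 - z) + (1 - x) * z)) := by
  rw [div_add_div _ _ h₁ h₂, div_sub' (mul_ne_zero h₁ h₂)]
  ring

lemma posterior_avg_mem_Icc (hx0 : 0 ≤ x) (hx : x ≤ 1 / 2) (hz0 : 0 < z) (hz1 : z < 1) :
    (x * z / (x * z + (1 - x) * (1 - z)) + x * (1 - z) / (x * (1 - z) + (1 - x) * z)) / 2 ∈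
      Icc x (1 / 2) := by
  have h2x : 0 ≤ 1 - 2 * x := by linarith
  have h1x : 0 < 1 - x := by linarith
  have h1z : 0 < 1 - z := by linarith
  have h₁ : 0 < x * z + (1 - x) * (1 - z) := by positivity
  have h₂ : 0 < x * (1 - z) + (1 - x) * z := by positivity
  have hlow := posterior_sum_sub_two_mul h₁.ne' h₂.ne'
  have hupp := one_sub_posterior_sum h₁.ne' h₂.ne'
  constructor
  · have : 0 ≤ x * (1 - x) * (1 - 2 * x) * (1 - 2 * z) ^ 2 /
        ((x * z + (1 - x) * (1 - z)) * (x * (1 - z) + (1 - x) * z)) := by positivity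
    linarith
  · have : 0 ≤ z * (1 - z) * (1 - 2 * x) /
        ((x * z + (1 - x) * (1 - z)) * (x * (1 - z) + (1 - x) * z)) := by positivity
    linarith
end

theorem thm3_between_general (pc x x' z z' : ℝ) (y₁ y₂ y₃ y₄ : ℝ)
    (hx0 : 0 < x)
    (hz0 : 0 < z) (hz1 : z < 1)
    (hpch : pc = 1/2) (hx' : x' = 1 - x) (hz' : z' = 1 - z)
    (hxle : x ≤ 1/2)
    (Pca Pcab Pd Pcad Pcadb Pcbd Pcbdb EYad EYadb EYbd EYbdb RDtrue RDcrude RDobs : ℝ)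
    (hPca : Pca = x*pc/(x*pc + x'*(1-pc)))
    (hPcab : Pcab = (1-x)*pc/((1-x)*pc + (1-x')*(1-pc)))
    (hPd : Pd = z*pc + z'*(1-pc))
    (hPcad : Pcad = x*z*pc/(x*z*pc + x'*z'*(1-pc)))
    (hPcadb : Pcadb = x*(1-z)*pc/(x*(1-z)*pc + x'*(1-z')*(1-pc)))
    (hPcbd : Pcbd = (1-x)*z*pc/((1-x)*z*pc + (1-x')*z'*(1-pc)))
    (hPcbdb : Pcbdb = (1-x)*(1-z)*pc/((1-x)*(1-z)*pc + (1-x')*(1-z')*(1-pc)))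
    (hEYad : EYad = y₁*Pcad + y₂*(1-Pcad))
    (hEYadb : EYadb = y₁*Pcadb + y₂*(1-Pcadb))
    (hEYbd : EYbd = y₃*Pcbd + y₄*(1-Pcbd))
    (hEYbdb : EYbdb = y₃*Pcbdb + y₄*(1-Pcbdb))
    (hRDtrue : RDtrue = (y₁-y₃)*pc + (y₂-y₄)*(1-pc))
    (hRDcrude : RDcrude = (y₁*Pca + y₂*(1-Pca)) - (y₃*Pcab + y₄*(1-Pcab)))
    (hRDobs : RDobs = (EYad - EYbd)*Pd + (EYadb - EYbdb)*(1-Pd))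
    :
    min RDtrue RDcrude ≤ RDobs ∧ RDobs ≤ max RDtrue RDcrude := by
  subst hpch hx' hz'
  simp only [mul_half_div_mul_half_add, sub_sub_cancel] at hPca hPcab hPcad hPcadb hPcbd hPcbdb
  have h₁ : x * z + (1 - x) * (1 - z) ≠ 0 := by nlinarith
  have h₂ : x * (1 - z) + (1 - x) * z ≠ 0 := by nlinarith
  set p := x * z / (x * z + (1 - x) * (1 - z))
  set q := x * (1 - z) / (x * (1 - z) + (1 - x) * z)
  have hPcbd' : Pcbd = 1 - q := by rw [hPcbd, eq_sub_iff_add_eq']; exact div_add_div_swap_eq_one h₂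
  have hPcbdb' : Pcbdb = 1 - p := by rw [hPcbdb, eq_sub_iff_add_eq']; exact div_add_div_swap_eq_one h₁
  have hobs : RDobs = (y₁ - y₄) * ((p + q) / 2) + (y₂ - y₃) * (1 - (p + q) / 2) := by
    rw [hRDobs, hEYad, hEYadb, hEYbd, hEYbdb, hPcad, hPcadb, hPcbd', hPcbdb', hPd]; ring
  have htrue : RDtrue = (y₁ - y₄) * (1 / 2) + (y₂ - y₃) * (1 - 1 / 2) := by rw [hRDtrue]; ring
  have hcrude : RDcrude = (y₁ - y₄) * x + (y₂ - y₃) * (1 - x) := by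
    rw [hRDcrude, hPca, hPcab]; simp only [add_sub_cancel, div_one]; ring
  rw [hobs, htrue, hcrude]
  exact mul_add_mul_one_sub_mem_uIcc
    (Icc_subset_uIcc' (posterior_avg_mem_Icc hx0.le hxle hz0 hz1))

theorem thm3_between (pc x x' z z' : ℝ) (y₁ y₂ y₃ y₄ : ℝ)
    (hpc : 0 < pc) (hpc1 : pc < 1)
    (hx0 : 0 < x) (hx1 : x < 1) (hx'0 : 0 < x') (hx'1 : x' < 1)
    (hz0 : 0 < z) (hz1 : z < 1) (hz'0 : 0 < z') (hz'1 : z' < 1)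
    (hpch : pc = 1/2) (hx' : x' = 1 - x) (hz' : z' = 1 - z)
    (hxle : x ≤ 1/2) (hzle : z ≤ 1/2)
    (Pca Pcab Pd Pcad Pcadb Pcbd Pcbdb EYad EYadb EYbd EYbdb RDtrue RDcrude RDobs : ℝ)
    (hPca : Pca = x*pc/(x*pc + x'*(1-pc)))
    (hPcab : Pcab = (1-x)*pc/((1-x)*pc + (1-x')*(1-pc)))
    (hPd : Pd = z*pc + z'*(1-pc))
    (hPcad : Pcad = x*z*pc/(x*z*pc + x'*z'*(1-pc)))
    (hPcadb : Pcadb = x*(1-z)*pc/(x*(1-z)*pc + x'*(1-z')*(1-pc)))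
    (hPcbd : Pcbd = (1-x)*z*pc/((1-x)*z*pc + (1-x')*z'*(1-pc)))
    (hPcbdb : Pcbdb = (1-x)*(1-z)*pc/((1-x)*(1-z)*pc + (1-x')*(1-z')*(1-pc)))
    (hEYad : EYad = y₁*Pcad + y₂*(1-Pcad))
    (hEYadb : EYadb = y₁*Pcadb + y₂*(1-Pcadb))
    (hEYbd : EYbd = y₃*Pcbd + y₄*(1-Pcbd))
    (hEYbdb : EYbdb = y₃*Pcbdb + y₄*(1-Pcbdb))
    (hRDtrue : RDtrue = (y₁-y₃)*pc + (y₂-y₄)*(1-pc))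
    (hRDcrude : RDcrude = (y₁*Pca + y₂*(1-Pca)) - (y₃*Pcab + y₄*(1-Pcab)))
    (hRDobs : RDobs = (EYad - EYbd)*Pd + (EYadb - EYbdb)*(1-Pd))
    :
    min RDtrue RDcrude ≤ RDobs ∧ RDobs ≤ max RDtrue RDcrude :=
  thm3_between_general pc x x' z z' y₁ y₂ y₃ y₄ hx0 hz0 hz1 hpch hx' hz' hxle Pca Pcab Pd Pcad Pcadb
    Pcbd Pcbdb EYad EYadb EYbd EYbdb RDtrue RDcrude RDobs hPca hPcab hPd hPcad hPcadb hPcbd hPcbdb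
    hEYad hEYadb hEYbd hEYbdb hRDtrue hRDcrude hRDobs
end

section
/- Suppose π = 1/2, x′ = 1−x, z′ = 1−z, x ≥ 1/2 and z > 1/2. Then y₁ − y₂ ≥ y₄ − y₃ ≥ 0 if and only if E[Y|a,d] − E[Y|a,d̄] ≥ E[Y|ā,d̄] − E[Y|ā,d] ≥ 0; likewise, y₁ − y₂ ≤ y₄ − y₃ ≤ 0 if and only if E[Y|a,d] − E[Y|a,d̄] ≤ E[Y|ā,d̄] − E[Y|ā,d] ≤ 0. (Paper's Corollary 3.) -/
/-!
With `π = 1/2`, `x' = 1 - x` and `z' = 1 - z` the four posteriors are tied by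
`P(c|ā,d̄) = 1 - P(c|a,d)` and `P(c|ā,d) = 1 - P(c|a,d̄)`. Hence both contrasts in `D` are the
corresponding contrasts in `C` scaled by the same factor `K = P(c|a,d) - P(c|a,d̄)`:
`E[Y|a,d] - E[Y|a,d̄] = (y₁ - y₂) K` and `E[Y|ā,d̄] - E[Y|ā,d] = (y₄ - y₃) K`,
and `K > 0` as soon as `z > 1/2`.
-/

theorem and_le_iff_mul_pos {α : Type*} [Field α] [LinearOrder α] [IsStrictOrderedRing α]
    {u v k : α} (hk : 0 < k) :
    (v ≤ u ∧ 0 ≤ v ↔ v * k ≤ u * k ∧ 0 ≤ v * k) ∧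
      (u ≤ v ∧ v ≤ 0 ↔ u * k ≤ v * k ∧ v * k ≤ 0) :=
  ⟨and_congr (mul_le_mul_iff_left₀ hk).symm (mul_nonneg_iff_of_pos_right hk).symm,
    and_congr (mul_le_mul_iff_left₀ hk).symm
      (by simpa using (mul_le_mul_iff_left₀ hk (b := v) (c := 0)).symm)⟩

theorem mix_sub_mix {R : Type*} [CommRing R] (y y' p q : R) :
    (y * p + y' * (1 - p)) - (y * q + y' * (1 - q)) = (y - y') * (p - q) := by
  ring

theorem bayes_half {K : Type*} [DivisionRing K] [CharZero K] (a b : K) :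
    a * (1 / 2) / (a * (1 / 2) + b * (1 - 1 / 2)) = a / (a + b) := by
  rw [show (1 : K) - 1 / 2 = 1 / 2 by norm_num, ← add_mul,
    mul_div_mul_right _ _ (by norm_num)]

theorem div_add_rev_eq_one_sub {K : Type*} [Field K] {a b : K} (h : a + b ≠ 0) :
    b / (b + a) = 1 - a / (a + b) := by
  rw [add_comm b a, one_sub_div h, add_sub_cancel_left]

theorem posterior_lt_posterior {x z : ℝ} (hx0 : 0 < x) (hx1 : x < 1)
    (hz : 1 / 2 < z) (hz1 : z < 1) :
    x * (1 - z) / (x * (1 - z) + (1 - x) * z) < x * z / (x * z + (1 - x) * (1 - z)) := by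
  have h1x : 0 < 1 - x := by linarith
  have h1z : 0 < 1 - z := by linarith
  have h2z : 0 < 2 * z - 1 := by linarith
  rw [div_lt_div_iff₀ (by positivity) (by positivity)]
  have hgap : 0 < x * (1 - x) * (2 * z - 1) := by positivity
  linarith [show x * z * (x * (1 - z) + (1 - x) * z)
      - x * (1 - z) * (x * z + (1 - x) * (1 - z)) = x * (1 - x) * (2 * z - 1) by ring]

theorem cor3_general (pc x x' z z' : ℝ) (y₁ y₂ y₃ y₄ : ℝ)
    (hx0 : 0 < x) (hx1 : x < 1)
    (hz1 : z < 1)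
    (hpch : pc = 1/2) (hx' : x' = 1 - x) (hz' : z' = 1 - z)
    (hzgt : z > 1/2)
    (Pcad Pcadb Pcbd Pcbdb EYad EYadb EYbd EYbdb : ℝ)
    (hPcad : Pcad = x*z*pc/(x*z*pc + x'*z'*(1-pc)))
    (hPcadb : Pcadb = x*(1-z)*pc/(x*(1-z)*pc + x'*(1-z')*(1-pc)))
    (hPcbd : Pcbd = (1-x)*z*pc/((1-x)*z*pc + (1-x')*z'*(1-pc)))
    (hPcbdb : Pcbdb = (1-x)*(1-z)*pc/((1-x)*(1-z)*pc + (1-x')*(1-z')*(1-pc)))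
    (hEYad : EYad = y₁*Pcad + y₂*(1-Pcad))
    (hEYadb : EYadb = y₁*Pcadb + y₂*(1-Pcadb))
    (hEYbd : EYbd = y₃*Pcbd + y₄*(1-Pcbd))
    (hEYbdb : EYbdb = y₃*Pcbdb + y₄*(1-Pcbdb))
    :
    ((y₁ - y₂ ≥ y₄ - y₃ ∧ y₄ - y₃ ≥ 0) ↔
      (EYad - EYadb ≥ EYbdb - EYbd ∧ EYbdb - EYbd ≥ 0)) ∧
    ((y₁ - y₂ ≤ y₄ - y₃ ∧ y₄ - y₃ ≤ 0) ↔
      (EYad - EYadb ≤ EYbdb - EYbd ∧ EYbdb - EYbd ≤ 0)) := by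
  subst hpch hx' hz'
  simp only [bayes_half, sub_sub_cancel] at hPcad hPcadb hPcbd hPcbdb
  have h1x : 0 < 1 - x := by linarith
  have h1z : 0 < 1 - z := by linarith
  have hPcbdb' : Pcbdb = 1 - Pcad := by
    rw [hPcbdb, hPcad, div_add_rev_eq_one_sub (by positivity)]
  have hPcbd' : Pcbd = 1 - Pcadb := by
    rw [hPcbd, hPcadb, div_add_rev_eq_one_sub (by positivity)]
  have hK : 0 < Pcad - Pcadb := by
    rw [hPcad, hPcadb, sub_pos]
    exact posterior_lt_posterior hx0 hx1 hzgt hz1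
  have hA : EYad - EYadb = (y₁ - y₂) * (Pcad - Pcadb) := by
    rw [hEYad, hEYadb, mix_sub_mix]
  have hB : EYbdb - EYbd = (y₄ - y₃) * (Pcad - Pcadb) := by
    rw [hEYbdb, hEYbd, mix_sub_mix, hPcbdb', hPcbd']
    ring
  rw [hA, hB]
  exact and_le_iff_mul_pos hK

theorem cor3 (pc x x' z z' : ℝ) (y₁ y₂ y₃ y₄ : ℝ)
    (hpc : 0 < pc) (hpc1 : pc < 1)
    (hx0 : 0 < x) (hx1 : x < 1) (hx'0 : 0 < x') (hx'1 : x' < 1)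
    (hz0 : 0 < z) (hz1 : z < 1) (hz'0 : 0 < z') (hz'1 : z' < 1)
    (hpch : pc = 1/2) (hx' : x' = 1 - x) (hz' : z' = 1 - z)
    (hxge : x ≥ 1/2) (hzgt : z > 1/2)
    (Pcad Pcadb Pcbd Pcbdb EYad EYadb EYbd EYbdb : ℝ)
    (hPcad : Pcad = x*z*pc/(x*z*pc + x'*z'*(1-pc)))
    (hPcadb : Pcadb = x*(1-z)*pc/(x*(1-z)*pc + x'*(1-z')*(1-pc)))
    (hPcbd : Pcbd = (1-x)*z*pc/((1-x)*z*pc + (1-x')*z'*(1-pc)))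
    (hPcbdb : Pcbdb = (1-x)*(1-z)*pc/((1-x)*(1-z)*pc + (1-x')*(1-z')*(1-pc)))
    (hEYad : EYad = y₁*Pcad + y₂*(1-Pcad))
    (hEYadb : EYadb = y₁*Pcadb + y₂*(1-Pcadb))
    (hEYbd : EYbd = y₃*Pcbd + y₄*(1-Pcbd))
    (hEYbdb : EYbdb = y₃*Pcbdb + y₄*(1-Pcbdb))
    :
    ((y₁ - y₂ ≥ y₄ - y₃ ∧ y₄ - y₃ ≥ 0) ↔
      (EYad - EYadb ≥ EYbdb - EYbd ∧ EYbdb - EYbd ≥ 0)) ∧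
    ((y₁ - y₂ ≤ y₄ - y₃ ∧ y₄ - y₃ ≤ 0) ↔
      (EYad - EYadb ≤ EYbdb - EYbd ∧ EYbdb - EYbd ≤ 0)) :=
  cor3_general pc x x' z z' y₁ y₂ y₃ y₄ hx0 hx1 hz1 hpch hx' hz' hzgt Pcad Pcadb Pcbd Pcbdb EYad
    EYadb EYbd EYbdb hPcad hPcadb hPcbd hPcbdb hEYad hEYadb hEYbd hEYbdb
end

section
/- Suppose π = 1/2, x′ = 1−x, z′ = 1−z, x ≤ 1/2 and z < 1/2. Then y₁ − y₂ ≥ y₄ − y₃ ≥ 0 if and only if E[Y|a,d] − E[Y|a,d̄] ≤ E[Y|ā,d̄] − E[Y|ā,d] ≤ 0; likewise, y₁ − y₂ ≤ y₄ − y₃ ≤ 0 if and only if E[Y|a,d] − E[Y|a,d̄] ≥ E[Y|ā,d̄] − E[Y|ā,d] ≥ 0. (Paper's Corollary 4.) -/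
/-!
With `π = 1/2`, `x' = 1 - x` and `z' = 1 - z` the model is invariant under relabelling `c ↔ c̄`
together with `a ↔ ā` and `d ↔ d̄`, so `P(c|ā,d) = 1 - P(c|a,d̄)` and `P(c|ā,d̄) = 1 - P(c|a,d)`.
Hence both contrasts are multiples of the same `Δ = P(c|a,d) - P(c|a,d̄)`:
`E[Y|a,d] - E[Y|a,d̄] = (y₁ - y₂) Δ` and `E[Y|ā,d̄] - E[Y|ā,d] = (y₄ - y₃) Δ`.
Since `z < 1/2`, observing `d` is evidence against `c`, so `Δ < 0`, and multiplying by `Δ` reverses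
both inequalities of each chain.
-/

section Posterior

variable {K : Type*} [Field K]

/-- `P(c | e)` for prior `P(c) = π` and likelihoods `p = P(e | c)`, `q = P(e | c̄)`. -/
def posterior (π p q : K) : K := p * π / (p * π + q * (1 - π))

theorem posterior_one_sub_swap {π p q : K} (h : p * π + q * (1 - π) ≠ 0) :
    posterior (1 - π) q p = 1 - posterior π p q := by
  unfold posterior
  rw [sub_sub_cancel, add_comm (q * (1 - π)), eq_sub_iff_add_eq, ← add_div, add_comm,
    div_self h]

variable [LinearOrder K] [IsStrictOrderedRing K]

theorem posterior_lt_posterior_iff {π p q p' q' : K} (hπ0 : 0 < π) (hπ1 : π < 1)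
    (hp : 0 < p) (hq : 0 < q) (hp' : 0 < p') (hq' : 0 < q') :
    posterior π p q < posterior π p' q' ↔ p * q' < p' * q := by
  have hπ1' : 0 < 1 - π := sub_pos.mpr hπ1
  unfold posterior
  rw [div_lt_div_iff₀ (by positivity) (by positivity), ← sub_pos, ← sub_pos (b := p * q')]
  have cross : p' * π * (p * π + q * (1 - π)) - p * π * (p' * π + q' * (1 - π))
      = π * (1 - π) * (p' * q - p * q') := by ring
  rw [cross, mul_pos_iff_of_pos_left (by positivity)]

end Posterior

theorem chain_iff_mul_chain_of_neg {K : Type*} [Field K] [LinearOrder K] [IsStrictOrderedRing K]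
    {Δ : K} (hΔ : Δ < 0) (u v : K) :
    ((v ≤ u ∧ 0 ≤ v) ↔ (u * Δ ≤ v * Δ ∧ v * Δ ≤ 0)) ∧
    ((u ≤ v ∧ v ≤ 0) ↔ (v * Δ ≤ u * Δ ∧ 0 ≤ v * Δ)) := by
  have key : ∀ a b : K, a * Δ ≤ b * Δ ↔ b ≤ a := fun _ _ => mul_le_mul_right_of_neg hΔ
  simpa only [zero_mul] using
    And.intro (and_congr (key u v).symm (key v 0).symm) (and_congr (key v u).symm (key 0 v).symm)

theorem cor4_general (pc x x' z z' : ℝ) (y₁ y₂ y₃ y₄ : ℝ)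
    (hx0 : 0 < x) (hx1 : x < 1) (hz0 : 0 < z)
    (hpch : pc = 1/2) (hx' : x' = 1 - x) (hz' : z' = 1 - z)
    (hzlt : z < 1/2)
    (Pcad Pcadb Pcbd Pcbdb EYad EYadb EYbd EYbdb : ℝ)
    (hPcad : Pcad = x*z*pc/(x*z*pc + x'*z'*(1-pc)))
    (hPcadb : Pcadb = x*(1-z)*pc/(x*(1-z)*pc + x'*(1-z')*(1-pc)))
    (hPcbd : Pcbd = (1-x)*z*pc/((1-x)*z*pc + (1-x')*z'*(1-pc)))
    (hPcbdb : Pcbdb = (1-x)*(1-z)*pc/((1-x)*(1-z)*pc + (1-x')*(1-z')*(1-pc)))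
    (hEYad : EYad = y₁*Pcad + y₂*(1-Pcad))
    (hEYadb : EYadb = y₁*Pcadb + y₂*(1-Pcadb))
    (hEYbd : EYbd = y₃*Pcbd + y₄*(1-Pcbd))
    (hEYbdb : EYbdb = y₃*Pcbdb + y₄*(1-Pcbdb))
    :
    ((y₁ - y₂ ≥ y₄ - y₃ ∧ y₄ - y₃ ≥ 0) ↔
      (EYad - EYadb ≤ EYbdb - EYbd ∧ EYbdb - EYbd ≤ 0)) ∧
    ((y₁ - y₂ ≤ y₄ - y₃ ∧ y₄ - y₃ ≤ 0) ↔
      (EYad - EYadb ≥ EYbdb - EYbd ∧ EYbdb - EYbd ≥ 0)) := by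
  subst hpch hx' hz'
  have hx1' : 0 < 1 - x := sub_pos.mpr hx1
  have hz1' : 0 < 1 - z := by linarith
  have hPcad' : Pcad = posterior (1/2) (x * z) ((1 - x) * (1 - z)) := hPcad
  have hPcadb' : Pcadb = posterior (1/2) (x * (1 - z)) ((1 - x) * z) := by
    rw [hPcadb, posterior]; ring
  have hPcbd' : Pcbd = 1 - Pcadb := by
    rw [hPcadb', ← posterior_one_sub_swap (by positivity), hPcbd, posterior]; ring
  have hPcbdb' : Pcbdb = 1 - Pcad := by
    rw [hPcad', ← posterior_one_sub_swap (by positivity), hPcbdb, posterior]; ring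
  have hΔ : Pcad - Pcadb < 0 := by
    rw [sub_neg, hPcad', hPcadb', posterior_lt_posterior_iff (by norm_num) (by norm_num)
      (by positivity) (by positivity) (by positivity) (by positivity)]
    nlinarith [mul_pos hx0 hx1']
  have hEYa : EYad - EYadb = (y₁ - y₂) * (Pcad - Pcadb) := by rw [hEYad, hEYadb]; ring
  have hEYb : EYbdb - EYbd = (y₄ - y₃) * (Pcad - Pcadb) := by
    rw [hEYbdb, hEYbd, hPcbd', hPcbdb']; ring
  rw [hEYa, hEYb]
  exact chain_iff_mul_chain_of_neg hΔ _ _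

theorem cor4 (pc x x' z z' : ℝ) (y₁ y₂ y₃ y₄ : ℝ)
    (hpc : 0 < pc) (hpc1 : pc < 1)
    (hx0 : 0 < x) (hx1 : x < 1) (hx'0 : 0 < x') (hx'1 : x' < 1)
    (hz0 : 0 < z) (hz1 : z < 1) (hz'0 : 0 < z') (hz'1 : z' < 1)
    (hpch : pc = 1/2) (hx' : x' = 1 - x) (hz' : z' = 1 - z)
    (hxle : x ≤ 1/2) (hzlt : z < 1/2)
    (Pcad Pcadb Pcbd Pcbdb EYad EYadb EYbd EYbdb : ℝ)
    (hPcad : Pcad = x*z*pc/(x*z*pc + x'*z'*(1-pc)))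
    (hPcadb : Pcadb = x*(1-z)*pc/(x*(1-z)*pc + x'*(1-z')*(1-pc)))
    (hPcbd : Pcbd = (1-x)*z*pc/((1-x)*z*pc + (1-x')*z'*(1-pc)))
    (hPcbdb : Pcbdb = (1-x)*(1-z)*pc/((1-x)*(1-z)*pc + (1-x')*(1-z')*(1-pc)))
    (hEYad : EYad = y₁*Pcad + y₂*(1-Pcad))
    (hEYadb : EYadb = y₁*Pcadb + y₂*(1-Pcadb))
    (hEYbd : EYbd = y₃*Pcbd + y₄*(1-Pcbd))
    (hEYbdb : EYbdb = y₃*Pcbdb + y₄*(1-Pcbdb))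
    :
    ((y₁ - y₂ ≥ y₄ - y₃ ∧ y₄ - y₃ ≥ 0) ↔
      (EYad - EYadb ≤ EYbdb - EYbd ∧ EYbdb - EYbd ≤ 0)) ∧
    ((y₁ - y₂ ≤ y₄ - y₃ ∧ y₄ - y₃ ≤ 0) ↔
      (EYad - EYadb ≥ EYbdb - EYbd ∧ EYbdb - EYbd ≥ 0)) :=
  cor4_general pc x x' z z' y₁ y₂ y₃ y₄ hx0 hx1 hz0 hpch hx' hz' hzlt Pcad Pcadb Pcbd Pcbdb EYad
    EYadb EYbd EYbdb hPcad hPcadb hPcbd hPcbdb hEYad hEYadb hEYbd hEYbdb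
end

section
/- Let α, β, γ, δ be real numbers with β² ≤ 1, δ² ≤ 1 and β²δ² < 1. Set βYA·C = α, βYA = α + βγ, and βYA·D = α + γβ(1−δ²)/(1−β²δ²). If βγ ≥ 0 (i.e. β and γ have the same sign) then βYA·C ≤ βYA·D ≤ βYA; and if βγ ≤ 0 then βYA·C ≥ βYA·D ≥ βYA. (Paper's Theorem 13 on path diagrams.) -/
/-! Partial adjustment for `D` shrinks the confounding bias `βγ` by the factor
`(1 - δ²) / (1 - β²δ²)`, which lies in `[0, 1]` because `β² ≤ 1`; so `βYA·D` lies on the segment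
between the true effect `α` and the crude effect `α + βγ`. -/

section BetweenEndpoints

variable {R : Type*} [Ring R] [PartialOrder R] [IsOrderedRing R] {t c : R}

theorem le_add_mul_le_add_of_nonneg (x : R) (ht₀ : 0 ≤ t) (ht₁ : t ≤ 1) (hc : 0 ≤ c) :
    x ≤ x + t * c ∧ x + t * c ≤ x + c :=
  ⟨le_add_of_nonneg_right (mul_nonneg ht₀ hc), add_le_add_right (mul_le_of_le_one_left hc ht₁) x⟩

theorem add_le_add_mul_le_of_nonpos (x : R) (ht₀ : 0 ≤ t) (ht₁ : t ≤ 1) (hc : c ≤ 0) :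
    x + c ≤ x + t * c ∧ x + t * c ≤ x :=
  ⟨add_le_add_right (le_mul_of_le_one_left hc ht₁) x,
    add_le_of_nonpos_right (mul_nonpos_of_nonneg_of_nonpos ht₀ hc)⟩

end BetweenEndpoints

theorem partial_adjustment_factor_mem_Icc {β δ : ℝ} (hβ : β ^ 2 ≤ 1) (hδ : δ ^ 2 ≤ 1)
    (hβδ : β ^ 2 * δ ^ 2 < 1) : (1 - δ ^ 2) / (1 - β ^ 2 * δ ^ 2) ∈ Set.Icc 0 1 := by
  have hden : 0 < 1 - β ^ 2 * δ ^ 2 := sub_pos.mpr hβδ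
  exact ⟨div_nonneg (sub_nonneg.mpr hδ) hden.le,
    (div_le_one hden).mpr (sub_le_sub_left (mul_le_of_le_one_left (sq_nonneg δ) hβ) 1)⟩

theorem thm13_path_diagram (α β γ δ : ℝ)
    (hβ : β^2 ≤ 1) (hδ : δ^2 ≤ 1) (hβδ : β^2*δ^2 < 1)
    (βYAC βYA βYAD : ℝ)
    (h1 : βYAC = α) (h2 : βYA = α + β*γ)
    (h3 : βYAD = α + γ*β*(1-δ^2)/(1-β^2*δ^2)) :
    (β*γ ≥ 0 → βYAC ≤ βYAD ∧ βYAD ≤ βYA) ∧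
    (β*γ ≤ 0 → βYAC ≥ βYAD ∧ βYAD ≥ βYA) := by
  obtain ⟨ht₀, ht₁⟩ := partial_adjustment_factor_mem_Icc hβ hδ hβδ
  have hD : βYAD = α + (1 - δ ^ 2) / (1 - β ^ 2 * δ ^ 2) * (β * γ) := by
    rw [h3]; ring
  rw [h1, h2, hD]
  exact ⟨fun hc => le_add_mul_le_add_of_nonneg α ht₀ ht₁ hc,
    fun hc => (add_le_add_mul_le_of_nonpos α ht₀ ht₁ hc).symm⟩
end

section
/- Suppose π = 1/2 and x ≥ x′. Then P(c|a,d)·P(d) + P(c|a,d̄)·(1−P(d)) ≥ 1/2. (Intermediate claim, Equation (foo1) in the proof of the paper's Theorem 2.) -/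
/-!
With `π = 1/2` the posterior reads `P(c|a,d) = x z / (x z + x' z')` and `P(d) = (z + z') / 2`.
Since `x ≥ x'`, the posterior dominates its value `z / (z + z')` at `x = x'`, so
`P(c|a,d) P(d) ≥ z / 2`; likewise `P(c|a,d̄) (1 - P(d)) ≥ (1 - z) / 2`, and the two bounds
add up to `1/2`.
-/

lemma le_mul_div_add_mul_mul_add {x x' u v : ℝ} (hx : 0 < x) (hx' : 0 ≤ x') (hxx' : x' ≤ x)
    (hu : 0 < u) (hv : 0 ≤ v) :
    u ≤ x * u / (x * u + x' * v) * (u + v) := by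
  have hden : 0 < x * u + x' * v := by positivity
  rw [div_mul_eq_mul_div, le_div_iff₀ hden]
  nlinarith [mul_le_mul_of_nonneg_right hxx' (mul_nonneg hu.le hv)]

lemma div_mul_half_add_mul_half (a b u v : ℝ) :
    a * (1 / 2) / (a * (1 / 2) + b * (1 - 1 / 2)) * (u * (1 / 2) + v * (1 - 1 / 2)) =
      a / (a + b) * (u + v) / 2 := by
  rw [show (1 : ℝ) - 1 / 2 = 1 / 2 by norm_num, ← add_mul, ← add_mul,
    mul_div_mul_right _ _ (by norm_num)]
  ring

theorem foo1_claim_general (pc x x' z z' : ℝ)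
    (hx0 : 0 < x) (hx'0 : 0 < x')
    (hz0 : 0 < z) (hz1 : z < 1) (hz'0 : 0 < z') (hz'1 : z' < 1)
    (hpch : pc = 1/2) (hxx' : x ≥ x')
    (Pd Pcad Pcadb : ℝ)
    (hPd : Pd = z*pc + z'*(1-pc))
    (hPcad : Pcad = x*z*pc/(x*z*pc + x'*z'*(1-pc)))
    (hPcadb : Pcadb = x*(1-z)*pc/(x*(1-z)*pc + x'*(1-z')*(1-pc))) :
    Pcad*Pd + Pcadb*(1-Pd) ≥ 1/2 := by
  subst hpch hPd hPcad hPcadb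
  have hdbar : 1 - (z * (1 / 2) + z' * (1 - 1 / 2)) =
      (1 - z) * (1 / 2) + (1 - z') * (1 - 1 / 2) := by
    ring
  have hd_bound := le_mul_div_add_mul_mul_add hx0 hx'0.le hxx' hz0 hz'0.le
  have hdbar_bound := le_mul_div_add_mul_mul_add hx0 hx'0.le hxx' (sub_pos.2 hz1) (sub_pos.2 hz'1).le
  rw [hdbar, div_mul_half_add_mul_half, div_mul_half_add_mul_half]
  linarith

theorem foo1_claim (pc x x' z z' : ℝ)
    (hpc : 0 < pc) (hpc1 : pc < 1)
    (hx0 : 0 < x) (hx1 : x < 1) (hx'0 : 0 < x') (hx'1 : x' < 1)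
    (hz0 : 0 < z) (hz1 : z < 1) (hz'0 : 0 < z') (hz'1 : z' < 1)
    (hpch : pc = 1/2) (hxx' : x ≥ x')
    (Pd Pcad Pcadb : ℝ)
    (hPd : Pd = z*pc + z'*(1-pc))
    (hPcad : Pcad = x*z*pc/(x*z*pc + x'*z'*(1-pc)))
    (hPcadb : Pcadb = x*(1-z)*pc/(x*(1-z)*pc + x'*(1-z')*(1-pc))) :
    Pcad*Pd + Pcadb*(1-Pd) ≥ 1/2 :=
  foo1_claim_general pc x x' z z' hx0 hx'0 hz0 hz1 hz'0 hz'1 hpch hxx' Pd Pcad Pcadb hPd hPcad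
    hPcadb
end

section
/- Suppose π = 1/2, 1−x′ ≥ x ≥ 1/2 and 1−z′ ≥ z ≥ 1/2. Then P(c|a,d)·P(d) + P(c|a,d̄)·(1−P(d)) ≥ (1−P(c|ā,d))·P(d) + (1−P(c|ā,d̄))·(1−P(d)). (Key inequality in the proof of the paper's Theorem 9, verified there using Mathematica's FindInstance.) -/
/-!
For a value of `D` with likelihoods `w = P(·|c)`, `w' = P(·|c̄)`, write
`E(w, w') = P(c|a,·) + P(c|ā,·) − 1`. The difference of the two sides is
`P(d) E(z, z') + P(d̄) E(1 − z, 1 − z')`, and under the uniform prior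
`E(w, w') = (x(1−x) w² − x'(1−x') w'²) / ((x w + x' w') ((1−x) w + (1−x') w'))`.
Over the common denominator the weighted sum of the two excesses has numerator `(x − x') M`, where
`M` is a sum of products of the nonnegative quantities `x − x'`, `1 − x − x'`, `z − z'`,
`1 − z − z'` and `z² + (1−z)² − (1−z−z')²`.
-/

theorem uniform_prior_posterior (p q : ℝ) :
    p * (1 / 2) / (p * (1 / 2) + q * (1 - 1 / 2)) = p / (p + q) := by
  rw [show (1 : ℝ) - 1 / 2 = 1 / 2 by norm_num, ← add_mul]
  exact mul_div_mul_right p (p + q) (by norm_num)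

noncomputable def posteriorExcess (x x' w w' : ℝ) : ℝ :=
  x * w / (x * w + x' * w') + (1 - x) * w / ((1 - x) * w + (1 - x') * w') - 1

theorem posteriorExcess_eq {x x' w w' : ℝ} (h₁ : x * w + x' * w' ≠ 0)
    (h₂ : (1 - x) * w + (1 - x') * w' ≠ 0) :
    posteriorExcess x x' w w' = (x * (1 - x) * w ^ 2 - x' * (1 - x') * w' ^ 2) /
      ((x * w + x' * w') * ((1 - x) * w + (1 - x') * w')) := by
  unfold posteriorExcess
  rw [div_add_div _ _ h₁ h₂, div_sub_one (mul_ne_zero h₁ h₂)]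
  ring

theorem excess_numerator_nonneg {x x' z z' : ℝ} (hx' : 0 ≤ x') (hx'x : x' ≤ x)
    (hxx' : x ≤ 1 - x') (hz' : 0 ≤ z') (hz'z : z' ≤ z) (hzz' : z ≤ 1 - z') :
    0 ≤ (x - x') * ((z + z') * (2 - z - z') * (1 - x - x') *
        (x * (1 - x) * (z * (1 - z)) + x' * (1 - x') * (z' * (1 - z'))) +
      (x - x') * ((x - x') * (1 - x - x') * (z * (1 - z)) * (z ^ 2 + (1 - z) ^ 2 - (1 - z - z') ^ 2) +
        x' * (1 - x') * (1 - z - z') * (z - z') ^ 3)) := by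
  have hδx : 0 ≤ x - x' := by linarith
  have htx : 0 ≤ 1 - x - x' := by linarith
  have hδz : 0 ≤ z - z' := by linarith
  have htz : 0 ≤ 1 - z - z' := by linarith
  have hx : 0 ≤ x := by linarith
  have hx1 : 0 ≤ 1 - x := by linarith
  have hx'1 : 0 ≤ 1 - x' := by linarith
  have hz : 0 ≤ z := by linarith
  have hz1 : 0 ≤ 1 - z := by linarith
  have hz'1 : 0 ≤ 1 - z' := by linarith
  have hs' : 0 ≤ 2 - z - z' := by linarith
  have hW : 0 ≤ z ^ 2 + (1 - z) ^ 2 - (1 - z - z') ^ 2 := by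
    nlinarith [mul_nonneg htz hz']
  positivity

theorem weighted_posteriorExcess_nonneg {x x' z z' : ℝ} (hx' : 0 < x') (hx'x : x' ≤ x)
    (hxx' : x ≤ 1 - x') (hz' : 0 < z') (hz'z : z' ≤ z) (hzz' : z ≤ 1 - z') :
    0 ≤ (z + z') * posteriorExcess x x' z z' +
      (2 - z - z') * posteriorExcess x x' (1 - z) (1 - z') := by
  have hx : 0 < x := by linarith
  have hx1 : 0 < 1 - x := by linarith
  have hx'1 : 0 < 1 - x' := by linarith
  have hz : 0 < z := by linarith
  have hz1 : 0 < 1 - z := by linarith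
  have hz'1 : 0 < 1 - z' := by linarith
  have hD₁ : 0 < (x * z + x' * z') * ((1 - x) * z + (1 - x') * z') := by positivity
  have hD₂ : 0 < (x * (1 - z) + x' * (1 - z')) * ((1 - x) * (1 - z) + (1 - x') * (1 - z')) := by
    positivity
  rw [posteriorExcess_eq (by positivity) (by positivity),
    posteriorExcess_eq (by positivity) (by positivity), mul_div_assoc', mul_div_assoc',
    div_add_div _ _ hD₁.ne' hD₂.ne']
  refine div_nonneg ?_ (by positivity)
  exact (excess_numerator_nonneg hx'.le hx'x hxx' hz'.le hz'z hzz').trans_eq (by ring)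

theorem key_inequality_thm9_general (pc x x' z z' : ℝ)
    (hx'0 : 0 < x')
    (hz'0 : 0 < z')
    (hpch : pc = 1/2)
    (hxx' : 1 - x' ≥ x) (hxge : x ≥ 1/2)
    (hzz' : 1 - z' ≥ z) (hzge : z ≥ 1/2)
    (Pd Pcad Pcadb Pcbd Pcbdb : ℝ)
    (hPd : Pd = z*pc + z'*(1-pc))
    (hPcad : Pcad = x*z*pc/(x*z*pc + x'*z'*(1-pc)))
    (hPcadb : Pcadb = x*(1-z)*pc/(x*(1-z)*pc + x'*(1-z')*(1-pc)))
    (hPcbd : Pcbd = (1-x)*z*pc/((1-x)*z*pc + (1-x')*z'*(1-pc)))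
    (hPcbdb : Pcbdb = (1-x)*(1-z)*pc/((1-x)*(1-z)*pc + (1-x')*(1-z')*(1-pc))) :
    Pcad*Pd + Pcadb*(1-Pd) ≥ (1-Pcbd)*Pd + (1-Pcbdb)*(1-Pd) := by
  subst hpch hPd hPcad hPcadb hPcbd hPcbdb
  simp only [uniform_prior_posterior]
  have h := weighted_posteriorExcess_nonneg hx'0 (by linarith) hxx' hz'0 (by linarith) hzz'
  unfold posteriorExcess at h
  linear_combination (1 / 2) * h

theorem key_inequality_thm9 (pc x x' z z' : ℝ)
    (hpc : 0 < pc) (hpc1 : pc < 1)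
    (hx0 : 0 < x) (hx1 : x < 1) (hx'0 : 0 < x') (hx'1 : x' < 1)
    (hz0 : 0 < z) (hz1 : z < 1) (hz'0 : 0 < z') (hz'1 : z' < 1)
    (hpch : pc = 1/2)
    (hxx' : 1 - x' ≥ x) (hxge : x ≥ 1/2)
    (hzz' : 1 - z' ≥ z) (hzge : z ≥ 1/2)
    (Pd Pcad Pcadb Pcbd Pcbdb : ℝ)
    (hPd : Pd = z*pc + z'*(1-pc))
    (hPcad : Pcad = x*z*pc/(x*z*pc + x'*z'*(1-pc)))
    (hPcadb : Pcadb = x*(1-z)*pc/(x*(1-z)*pc + x'*(1-z')*(1-pc)))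
    (hPcbd : Pcbd = (1-x)*z*pc/((1-x)*z*pc + (1-x')*z'*(1-pc)))
    (hPcbdb : Pcbdb = (1-x)*(1-z)*pc/((1-x)*(1-z)*pc + (1-x')*(1-z')*(1-pc))) :
    Pcad*Pd + Pcadb*(1-Pd) ≥ (1-Pcbd)*Pd + (1-Pcbdb)*(1-Pd) :=
  key_inequality_thm9_general pc x x' z z' hx'0 hz'0 hpch hxx' hxge hzz' hzge Pd Pcad Pcadb Pcbd
    Pcbdb hPd hPcad hPcadb hPcbd hPcbdb
end
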